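/- Let N be a symplectic (BC_n) matroid of rank 2 on E_n that is representable over C (i.e., N = M(x) for some x ∈ SpG(2,2n)). Then N admits a symmetric lifting: there exists a rank-2 matroid M on [2n] with π(M) = N, where π deletes from the bases of M all non-admissible pairs {i, i*}. Moreover any such M arising from a point x ∈ SpG(2,2n) has degree deg(M) = #{ i : {i,i*} ∈ B(M) } ≠ 1. -/
import Mathlib


/-- The star involution on `E_n = [2n]`, `i* = 2n - 1 - i` (0-indexed). -/
def nstar (n : ℕ) (i : Fin (2*n)) : Fin (2*n) :=
  ⟨2*n - 1 - (i : ℕ), by have h := i.isLt; omega⟩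

/-- The symplectic linear form `s(x) = Σ_{i=1}^n x_{i,i*}`. -/
noncomputable def sSum (n : ℕ) (x : Fin (2*n) → Fin (2*n) → ℂ) : ℂ :=
  ∑ i ∈ Finset.univ.filter (fun i : Fin (2*n) => (i : ℕ) < n), x i (nstar n i)

lemma nstar_ne_self (n : ℕ) (i : Fin (2*n)) : nstar n i ≠ i := by
  intro h
  have := congrArg (Fin.val) h
  simp only [nstar] at this
  have := i.isLt
  omega

lemma nstar_nstar (n : ℕ) (i : Fin (2*n)) : nstar n (nstar n i) = i := by
  apply Fin.ext
  simp only [nstar]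
  have := i.isLt
  omega

/-- Every `ℂ`-representable symplectic matroid `N = M(x)` of rank 2 (for a
point `x ∈ SpG(2,2n)`) admits a symmetric lifting: the symmetric matroid
`M = M'(x)` with bases `B` the full Plücker support of `x` satisfies
`π(M) = N`, i.e. the admissible bases of `M` are exactly the bases of `N`;
moreover the degree `deg(M) = #{i : {i,i*} ∈ B}` of any such lifting coming
from a point of `SpG(2,2n)` is `≠ 1`. -/
theorem representable_admits_lifting (n : ℕ) (hn : 1 ≤ n)
    (x : Fin (2*n) → Fin (2*n) → ℂ) (hx0 : x ≠ 0)
    (hanti : ∀ i j, x j i = - x i j)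
    (hpl : ∀ a b c d, x a b * x c d - x a c * x b d + x a d * x b c = 0)
    (hs : sSum n x = 0) :
    ∃ B : Set (Finset (Fin (2*n))),
      (∀ i j : Fin (2*n), i ≠ j →
        (({i, j} : Finset (Fin (2*n))) ∈ B ↔ x i j ≠ 0)) ∧
      ({p ∈ B | ∀ i ∈ p, nstar n i ∉ p}
        = {p : Finset (Fin (2*n)) | ∃ i j : Fin (2*n), i ≠ j ∧ j ≠ nstar n i ∧
            p = {i, j} ∧ x i j ≠ 0}) ∧
      Nat.card {i : Fin (2*n) // (i : ℕ) < n ∧ x i (nstar n i) ≠ 0} ≠ 1 := by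
  refine ⟨{p | ∃ a b : Fin (2*n), a ≠ b ∧ p = {a, b} ∧ x a b ≠ 0}, ?_, ?_, ?_⟩
  · intro i j hij
    constructor
    · rintro ⟨a, b, hab, hp, hx⟩
      have hmem : ∀ c : Fin (2*n), c ∈ ({i,j} : Finset (Fin (2*n))) ↔ c ∈ ({a,b} : Finset (Fin (2*n))) := by
        intro c; rw [hp]
      have hi := (hmem i).mp (by simp)
      have hj := (hmem j).mp (by simp)
      simp only [Finset.mem_insert, Finset.mem_singleton] at hi hj
      rcases hi with rfl | rfl
      · rcases hj with rfl | rfl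
        · exact absurd rfl hij
        · exact hx
      · rcases hj with rfl | rfl
        · rw [hanti]; simpa using hx
        · exact absurd rfl hij
    · intro h
      exact ⟨i, j, hij, rfl, h⟩
  · ext p
    simp only [Set.mem_setOf_eq, Set.mem_sep_iff]
    constructor
    · rintro ⟨⟨a, b, hab, rfl, hx⟩, hstar⟩
      refine ⟨a, b, hab, ?_, rfl, hx⟩
      intro hbe
      exact hstar a (by simp) (by rw [← hbe]; simp)
    · rintro ⟨a, b, hab, hbs, rfl, hx⟩
      refine ⟨⟨a, b, hab, rfl, hx⟩, ?_⟩
      intro c hc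
      simp only [Finset.mem_insert, Finset.mem_singleton] at hc ⊢
      rcases hc with rfl | rfl
      · push_neg
        refine ⟨fun h => nstar_ne_self n c h, fun h => hbs h.symm⟩
      · push_neg
        refine ⟨fun h => hbs ?_, fun h => nstar_ne_self n c h⟩
        rw [← h, nstar_nstar]
  · intro hcard
    rw [Nat.card_eq_fintype_card, Fintype.card_eq_one_iff] at hcard
    obtain ⟨⟨i0, hi0n, hi0x⟩, huniq⟩ := hcard
    apply hi0x
    rw [← hs, sSum]
    symm
    apply Finset.sum_eq_single_of_mem i0 (by simpa using hi0n)
    intro b hb hne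
    by_contra hbx
    have : (⟨b, by simpa using hb, hbx⟩ : {i : Fin (2*n) // (i : ℕ) < n ∧ x i (nstar n i) ≠ 0}) = ⟨i0, hi0n, hi0x⟩ := huniq _
    exact hne (congrArg Subtype.val this)
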